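/- arXiv:1501.06052 — 4 statements merged into one kernel-verified Lean document; each statement's English description precedes it below -/
import Mathlib

section
/- Let H be a contextuality scenario and p : V(H) → [0,1] a probabilistic model. Then p admits a Q₁ certificate (a positive semidefinite matrix M indexed by V ∪ {1} with M_{11} = 1, M_{1v} = M_{vv} = p(v), M_{uv} = 0 for distinct u,v in a common edge, and ∑_{u∈e} M_{uv} = p(v) for all edges e and vertices v) if and only if p admits a macroscopic non-contextuality certificate: a positive semidefinite matrix γ indexed by V satisfying ∑_{u∈e} γ_{uv} = 0 for all edges e and vertices v; γ_{uv} = −p(u)p(v) for distinct u,v in a common edge; and γ_{vv} = p(v) − p(v)². -/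
/-!
With `M₁₁ = 1` and first row `(1, p)`, the Schur complement of the corner entry of `M`
is `γᵤᵥ = Mᵤᵥ - p(u)p(v)`, and `M` is positive semidefinite iff `γ` is. Under this
correspondence the linear constraints of the two certificates match, because
`∑_{u ∈ e} p(u) = 1` on every edge.
-/

/-- Q₁ certificate for a probabilistic model `p` on the scenario `(V, E)`:
a psd matrix over `{1} ∪ V` (the special index `1` being `none`) with `M₁₁ = 1`,
`M₁ᵥ = Mᵥᵥ = p(v)`, vanishing entries for distinct events in a common edge,
and edge row-sums equal to `p(v)`. -/
def Q1Cert {V : Type*} [Fintype V] [DecidableEq V] (E : Finset (Finset V))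
    (p : V → ℝ) (M : Matrix (Option V) (Option V) ℝ) : Prop :=
  M.PosSemidef ∧
  M none none = 1 ∧
  (∀ v : V, M none (some v) = p v) ∧
  (∀ v : V, M (some v) (some v) = p v) ∧
  (∀ e ∈ E, ∀ u ∈ e, ∀ v ∈ e, u ≠ v → M (some u) (some v) = 0) ∧
  (∀ e ∈ E, ∀ v : V, ∑ u ∈ e, M (some u) (some v) = p v)

/-- Macroscopic non-contextuality certificate for `p`: a psd matrix over `V` whose
edge row-sums vanish, with `γᵤᵥ = -p(u)p(v)` for distinct `u,v` in a common edge,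
and diagonal `p(v) - p(v)²`. -/
def MNCCert {V : Type*} [Fintype V] [DecidableEq V] (E : Finset (Finset V))
    (p : V → ℝ) (γ : Matrix V V ℝ) : Prop :=
  γ.PosSemidef ∧
  (∀ e ∈ E, ∀ v : V, ∑ u ∈ e, γ u v = 0) ∧
  (∀ e ∈ E, ∀ u ∈ e, ∀ v ∈ e, u ≠ v → γ u v = -(p u * p v)) ∧
  (∀ v : V, γ v v = p v - (p v) ^ 2)

open scoped ComplexOrder

namespace Matrix

variable {n 𝕜 : Type*} [Fintype n] [RCLike 𝕜]

theorem posSemidef_option_iff {M : Matrix (Option n) (Option n) 𝕜} (hM : M.IsHermitian)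
    (hM₀ : M none none = 1) :
    M.PosSemidef ↔
      (of fun i j => M (some i) (some j) - M (some i) none * M none (some j)).PosSemidef := by
  have hstar (i : n) : star (M (some i) none) = M none (some i) := hM.apply _ _
  let e := (Equiv.optionEquivSumPUnit.{0} n).symm
  have hblocks : M.submatrix e e = fromBlocks (of fun i j => M (some i) (some j))
      (of fun i (_ : Unit) => M (some i) none) (of fun i (_ : Unit) => M (some i) none)ᴴ 1 := by
    ext (i | _) (j | _) <;> simp [e, hM₀, hstar]
  let : Invertible (1 : Matrix Unit Unit 𝕜) := invertibleOne
  rw [← posSemidef_submatrix_equiv e, hblocks, PosDef.fromBlocks₂₂ _ _ PosDef.one]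
  congr! 1
  ext i j
  simp [mul_apply, hstar]

end Matrix

open Matrix

def borderedMatrix {V : Type*} (p : V → ℝ) (γ : Matrix V V ℝ) :
    Matrix (Option V) (Option V) ℝ :=
  of fun
    | none, none => 1
    | none, some v => p v
    | some u, none => p u
    | some u, some v => γ u v + p u * p v

section Certificates

variable {V : Type*} [Fintype V] [DecidableEq V] {E : Finset (Finset V)} {p : V → ℝ}

theorem Q1Cert.mncCert (hnorm : ∀ e ∈ E, ∑ v ∈ e, p v = 1)
    {M : Matrix (Option V) (Option V) ℝ} (hM : Q1Cert E p M) :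
    MNCCert E p (of fun u v => M (some u) (some v) - p u * p v) := by
  obtain ⟨hpsd, h₀, hrow₀, hdiag, hoff, hrow⟩ := hM
  have hcol₀ (u : V) : M (some u) none = p u := by
    simpa [hrow₀] using hpsd.1.apply none (some u)
  refine ⟨?_, fun e he v => ?_, fun e he u hu v hv huv => ?_, fun v => ?_⟩
  · simpa [hcol₀, hrow₀] using (posSemidef_option_iff hpsd.1 h₀).mp hpsd
  · simp [Finset.sum_sub_distrib, hrow e he v, ← Finset.sum_mul, hnorm e he]
  · simp [hoff e he u hu v hv huv]
  · simp [hdiag, sq]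

theorem MNCCert.q1Cert_borderedMatrix (hnorm : ∀ e ∈ E, ∑ v ∈ e, p v = 1)
    {γ : Matrix V V ℝ} (hγ : MNCCert E p γ) : Q1Cert E p (borderedMatrix p γ) := by
  obtain ⟨hpsd, hrow, hoff, hdiag⟩ := hγ
  have hherm : (borderedMatrix p γ).IsHermitian := by
    refine IsHermitian.ext fun i j => ?_
    have hsymm (u v : V) : γ v u = γ u v := hpsd.1.apply u v
    cases i <;> cases j <;> simp [borderedMatrix, mul_comm, hsymm]
  refine ⟨(posSemidef_option_iff hherm rfl).mpr ?_, rfl, fun v => rfl, fun v => ?_,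
    fun e he u hu v hv huv => ?_, fun e he v => ?_⟩
  · simp only [borderedMatrix, of_apply, add_sub_cancel_right]
    exact hpsd
  · simp [borderedMatrix, hdiag, sq]
  · simp [borderedMatrix, hoff e he u hu v hv huv]
  · simp [borderedMatrix, Finset.sum_add_distrib, hrow e he v, ← Finset.sum_mul, hnorm e he]

end Certificates

theorem q1_iff_mnc_general {V : Type*} [Fintype V] [DecidableEq V]
    (E : Finset (Finset V)) (p : V → ℝ)
    (hnorm : ∀ e ∈ E, ∑ v ∈ e, p v = 1) :
    (∃ M : Matrix (Option V) (Option V) ℝ, Q1Cert E p M) ↔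
      (∃ γ : Matrix V V ℝ, MNCCert E p γ) :=
  ⟨fun ⟨_, hM⟩ => ⟨_, hM.mncCert hnorm⟩,
    fun ⟨_, hγ⟩ => ⟨_, hγ.q1Cert_borderedMatrix hnorm⟩⟩

/-- A probabilistic model admits a Q₁ certificate iff it admits a macroscopic
non-contextuality certificate. -/
theorem q1_iff_mnc {V : Type*} [Fintype V] [DecidableEq V]
    (E : Finset (Finset V)) (p : V → ℝ)
    (hp : ∀ v, 0 ≤ p v ∧ p v ≤ 1)
    (hnorm : ∀ e ∈ E, ∑ v ∈ e, p v = 1) :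
    (∃ M : Matrix (Option V) (Option V) ℝ, Q1Cert E p M) ↔
      (∃ γ : Matrix V V ℝ, MNCCert E p γ) :=
  q1_iff_mnc_general E p hnorm
end

section
/- Equivalently to convexity of Q₁, the set of macroscopically non-contextual models is NOT obviously convex at the level of γ certificates: if γ_p and γ_q are MNC certificates for p and q respectively, then t·γ_p + (1−t)·γ_q + t(1−t)·(p−q)(p−q)^T is an MNC certificate for t·p + (1−t)·q, where (p−q)(p−q)^T denotes the rank-one matrix with entries (p(u)−q(u))(p(v)−q(v)). -/
open Finset Matrix

/-!
Mixing two models with weights `t, 1 - t` mixes their first moments linearly, but the second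
moments `p u * p v` fixed by a certificate pick up the cross term `t (1 - t) (p - q)(p - q)ᵀ`.
Adding this rank-one positive semidefinite matrix to the mixture of the
certificates restores the prescribed entries, and its row sums over an edge vanish because
`p` and `q` have the same total mass on every edge.
-/

theorem mix_mul_mix (t a b c d : ℝ) :
    (t * a + (1 - t) * c) * (t * b + (1 - t) * d) =
      t * (a * b) + (1 - t) * (c * d) - t * (1 - t) * ((a - c) * (b - d)) := by
  ring

theorem posSemidef_of_mul_self {V : Type*} [Fintype V] (d : V → ℝ) :
    (Matrix.of fun u v : V => d u * d v).PosSemidef :=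
  posSemidef_vecMulVec_self_star d

theorem sum_sub_mul_sub_eq_zero {V : Type*} {e : Finset V} {p q : V → ℝ}
    (h : ∑ u ∈ e, p u = ∑ u ∈ e, q u) (v : V) :
    ∑ u ∈ e, (p u - q u) * (p v - q v) = 0 := by
  rw [← sum_mul, sum_sub_distrib, h, sub_self, zero_mul]

theorem mnc_convex_combination_general {V : Type*} [Fintype V] [DecidableEq V]
    (E : Finset (Finset V)) (p q : V → ℝ)
    (hpnorm : ∀ e ∈ E, ∑ v ∈ e, p v = 1) (hqnorm : ∀ e ∈ E, ∑ v ∈ e, q v = 1)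
    (γp γq : Matrix V V ℝ)
    (hγp : MNCCert E p γp) (hγq : MNCCert E q γq)
    (t : ℝ) (ht0 : 0 ≤ t) (ht1 : t ≤ 1) :
    MNCCert E (fun v => t * p v + (1 - t) * q v)
      (t • γp + (1 - t) • γq +
        (t * (1 - t)) • Matrix.of fun u v : V => (p u - q u) * (p v - q v)) := by
  obtain ⟨hpsd_p, hsum_p, hoff_p, hdiag_p⟩ := hγp
  obtain ⟨hpsd_q, hsum_q, hoff_q, hdiag_q⟩ := hγq
  have h1t : 0 ≤ 1 - t := sub_nonneg.2 ht1
  refine ⟨?_, fun e he v => ?_, fun e he u hu v hv huv => ?_, fun v => ?_⟩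
  · exact ((hpsd_p.smul ht0).add (hpsd_q.smul h1t)).add
      ((posSemidef_of_mul_self (p - q)).smul (mul_nonneg ht0 h1t))
  all_goals simp only [Matrix.add_apply, Matrix.smul_apply, of_apply, smul_eq_mul]
  · have hmass : ∑ u ∈ e, p u = ∑ u ∈ e, q u := (hpnorm e he).trans (hqnorm e he).symm
    rw [sum_add_distrib, sum_add_distrib, ← mul_sum, ← mul_sum, ← mul_sum, hsum_p e he v,
      hsum_q e he v, sum_sub_mul_sub_eq_zero hmass]
    ring
  · rw [hoff_p e he u hu v hv huv, hoff_q e he u hu v hv huv, mix_mul_mix]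
    ring
  · rw [hdiag_p v, hdiag_q v, sq, sq, sq, mix_mul_mix]
    ring

/-- Combining MNC certificates: if `γ_p` and `γ_q` are MNC certificates for `p` and `q`,
then `t·γ_p + (1−t)·γ_q + t(1−t)·(p−q)(p−q)ᵀ` is an MNC certificate for
`t·p + (1−t)·q`. -/
theorem mnc_convex_combination {V : Type*} [Fintype V] [DecidableEq V]
    (E : Finset (Finset V)) (p q : V → ℝ)
    (hp : ∀ v, 0 ≤ p v ∧ p v ≤ 1) (hq : ∀ v, 0 ≤ q v ∧ q v ≤ 1)
    (hpnorm : ∀ e ∈ E, ∑ v ∈ e, p v = 1) (hqnorm : ∀ e ∈ E, ∑ v ∈ e, q v = 1)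
    (γp γq : Matrix V V ℝ)
    (hγp : MNCCert E p γp) (hγq : MNCCert E q γq)
    (t : ℝ) (ht0 : 0 ≤ t) (ht1 : t ≤ 1) :
    MNCCert E (fun v => t * p v + (1 - t) * q v)
      (t • γp + (1 - t) • γq +
        (t * (1 - t)) • Matrix.of fun u v : V => (p u - q u) * (p v - q v)) :=
  mnc_convex_combination_general E p q hpnorm hqnorm γp γq hγp hγq t ht0 ht1
end

section
/- Consider a marginal scenario (X, 𝓜, O) with observables X, maximal contexts 𝓜 ⊆ 2^X, and outcome set O, and its hypergraph H[X] whose vertices are pairs (C, (a_m)_{m∈C}) for C ∈ 𝓜 and whose edges are outcome sets of measurement protocols. Then every deterministic probabilistic model on H[X] is completely determined by a global assignment (a_m)_{m∈X} of an outcome to every observable: it assigns probability 1 to (C, (â_m)_{m∈C}) iff â_m = a_m for all m ∈ C. -/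
/-- An adaptive measurement protocol (decision tree): either stop, or measure an
observable `m` and continue with a protocol depending on the outcome. -/
inductive MTree (X O : Type) : Type
  | leaf : MTree X O
  | node (m : X) (f : O → MTree X O) : MTree X O

/-- Validity of a protocol on the marginal scenario `(X, 𝓜, O)`, given the set `S` of
observables measured so far: a leaf is valid iff `S` is a (maximal) context; a node
measuring `m` is valid iff `m` is new, jointly measurable with `S`, and every
continuation is valid. -/
def MValid {X O : Type} [DecidableEq X] (𝓜 : Finset (Finset X)) :
    Finset X → MTree X O → Prop
  | S, MTree.leaf => S ∈ 𝓜
  | S, MTree.node m f =>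
      m ∉ S ∧ (∃ C ∈ 𝓜, insert m S ⊆ C) ∧ ∀ o : O, MValid 𝓜 (insert m S) (f o)

/-- The outcome set of a protocol: events are pairs of the set of measured observables
together with the partial assignment of outcomes (`none` on unmeasured observables). -/
def MOutcomes {X O : Type} [Fintype X] [DecidableEq X] [Fintype O] [DecidableEq O] :
    MTree X O → Finset X → (X → Option O) → Finset (Finset X × (X → Option O))
  | MTree.leaf, S, g => {(S, g)}
  | MTree.node m f, S, g =>
      Finset.univ.biUnion fun o : O =>
        MOutcomes (f o) (insert m S) (Function.update g m (some o))

/-- A deterministic probabilistic model on the hypergraph `H[X]` of the marginal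
scenario: `{0,1}`-valued, and normalised on the outcome set of every valid protocol. -/
def IsDetModel {X O : Type} [Fintype X] [DecidableEq X] [Fintype O] [DecidableEq O]
    (𝓜 : Finset (Finset X)) (p : Finset X × (X → Option O) → ℝ) : Prop :=
  (∀ v, p v = 0 ∨ p v = 1) ∧
  ∀ T : MTree X O, MValid 𝓜 ∅ T →
    ∑ v ∈ MOutcomes T ∅ (fun _ => none), p v = 1

/-- A non-adaptive protocol measuring a fixed list of observables in order. -/
def MChain {X O : Type} : List X → MTree X O
  | [] => .leaf
  | x :: xs => .node x fun _ => MChain xs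

lemma mchain_valid {X O : Type} [DecidableEq X] (𝓜 : Finset (Finset X))
    (C : Finset X) (hC : C ∈ 𝓜) :
    ∀ (L : List X) (S : Finset X), L.Nodup → (∀ x ∈ L, x ∉ S) →
      S ∪ L.toFinset = C → MValid (O := O) 𝓜 S (MChain L)
  | [], S, _, _, hU => by
      have hS : S = C := by simpa using hU
      subst hS
      simpa [MChain, MValid] using hC
  | x :: xs, S, hnd, hdis, hU => by
      simp only [List.toFinset_cons, Finset.union_insert] at hU
      refine ⟨hdis x (by simp), ⟨C, hC, ?_⟩, fun o => ?_⟩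
      · rw [← hU]
        exact Finset.insert_subset_insert _ Finset.subset_union_left
      · exact mchain_valid 𝓜 C hC xs (insert x S) hnd.of_cons
          (fun y hy => by
            simp only [Finset.mem_insert, not_or]
            exact ⟨fun h => (List.nodup_cons.mp hnd).1 (h ▸ hy), hdis y (by simp [hy])⟩)
          (by rw [Finset.insert_union, ← hU])

lemma mem_mchain {X O : Type} [Fintype X] [DecidableEq X] [Fintype O] [DecidableEq O] :
    ∀ (L : List X) (S : Finset X) (g h : X → Option O),
      (∀ x, x ∉ L → h x = g x) → (∀ x ∈ L, (h x).isSome) →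
      (S ∪ L.toFinset, h) ∈ MOutcomes (MChain L) S g
  | [], S, g, h, hoff, _ => by
      have : h = g := funext fun x => hoff x (by simp)
      simp [MChain, MOutcomes, this]
  | x :: xs, S, g, h, hoff, hsome => by
      obtain ⟨o, ho⟩ := Option.isSome_iff_exists.mp (hsome x (by simp))
      have hmem := mem_mchain xs (insert x S) (Function.update g x (some o)) h
        (fun y hy => by
          by_cases hyx : y = x
          · subst hyx; simp [Function.update_self, ho]
          · rw [Function.update_of_ne hyx]
            exact hoff y (by simp [hy, hyx]))
        (fun y hy => hsome y (by simp [hy]))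
      have hset : insert x S ∪ xs.toFinset = S ∪ (x :: xs).toFinset := by
        simp [Finset.insert_union, Finset.union_insert]
      rw [hset] at hmem
      simp only [MChain, MOutcomes, Finset.mem_biUnion]
      exact ⟨o, Finset.mem_univ o, hmem⟩

lemma out_mchain {X O : Type} [Fintype X] [DecidableEq X] [Fintype O] [DecidableEq O] :
    ∀ (L : List X) (S : Finset X) (g : X → Option O) (D : Finset X) (h : X → Option O),
      (D, h) ∈ MOutcomes (MChain L) S g →
      D = S ∪ L.toFinset ∧ (∀ x, x ∉ L → h x = g x) ∧ ∀ x ∈ L, (h x).isSome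
  | [], S, g, D, h, hm => by
      simp only [MChain, MOutcomes, Finset.mem_singleton, Prod.mk.injEq] at hm
      exact ⟨by simp [hm.1], fun x _ => by rw [hm.2], by simp⟩
  | x :: xs, S, g, D, h, hm => by
      simp only [MChain, MOutcomes, Finset.mem_biUnion] at hm
      obtain ⟨o, -, hm⟩ := hm
      obtain ⟨hD, hoff, hsome⟩ := out_mchain xs (insert x S) (Function.update g x (some o)) D h hm
      refine ⟨by rw [hD]; simp [Finset.insert_union, Finset.union_insert], ?_, ?_⟩
      · intro y hy
        have hyx : y ≠ x := fun h' => hy (h' ▸ by simp)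
        have := hoff y (fun h' => hy (by simp [h']))
        rwa [Function.update_of_ne hyx] at this
      · intro y hy
        rcases List.mem_cons.mp hy with rfl | hy'
        · by_cases hx : y ∈ xs
          · exact hsome y hx
          · rw [hoff y hx, Function.update_self]; rfl
        · exact hsome y hy'

lemma sum_one_exists {ι : Type*} [DecidableEq ι] {s : Finset ι} {f : ι → ℝ}
    (h01 : ∀ v, f v = 0 ∨ f v = 1) (hsum : ∑ v ∈ s, f v = 1) :
    ∃ v ∈ s, f v = 1 := by
  by_contra hc
  push_neg at hc
  have : ∑ v ∈ s, f v = 0 :=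
    Finset.sum_eq_zero fun v hv => (h01 v).resolve_right (hc v hv)
  rw [this] at hsum; norm_num at hsum

lemma sum_one_unique {ι : Type*} [DecidableEq ι] {s : Finset ι} {f : ι → ℝ}
    (h01 : ∀ v, f v = 0 ∨ f v = 1) (hsum : ∑ v ∈ s, f v = 1)
    {v w : ι} (hv : v ∈ s) (hw : w ∈ s) (hfv : f v = 1) (hfw : f w = 1) : v = w := by
  by_contra hne
  have hsub : ({v, w} : Finset ι) ⊆ s := by
    intro x hx; rcases Finset.mem_insert.mp hx with rfl | hx
    · exact hv
    · exact Finset.mem_singleton.mp hx ▸ hw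
  have h2 : ∑ x ∈ ({v, w} : Finset ι), f x = 2 := by
    rw [Finset.sum_pair hne, hfv, hfw]; norm_num
  have hle : ∑ x ∈ ({v, w} : Finset ι), f x ≤ ∑ x ∈ s, f x :=
    Finset.sum_le_sum_of_subset_of_nonneg hsub fun x _ _ =>
      (h01 x).elim (fun h => h.ge) (fun h => by rw [h]; norm_num)
  rw [h2, hsum] at hle; norm_num at hle

lemma ins_erase_union {X : Type} [DecidableEq X] {m : X} {C : Finset X} (hm : m ∈ C) :
    insert m ∅ ∪ (C.erase m).toList.toFinset = C := by
  rw [Finset.toList_toFinset, Finset.insert_union, Finset.empty_union, Finset.insert_erase hm]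

/-- Key step: two probability-one events agree on any shared observable. -/
lemma det_agree {X O : Type} [Fintype X] [DecidableEq X] [Fintype O] [DecidableEq O]
    (𝓜 : Finset (Finset X)) (p : Finset X × (X → Option O) → ℝ)
    (hdet : IsDetModel 𝓜 p)
    {C C' : Finset X} (hC : C ∈ 𝓜) (hC' : C' ∈ 𝓜)
    {g g' : X → Option O}
    (hg0 : ∀ x, x ∉ C → g x = none) (hg1 : ∀ x ∈ C, (g x).isSome)
    (hg0' : ∀ x, x ∉ C' → g' x = none) (hg1' : ∀ x ∈ C', (g' x).isSome)
    (hp : p (C, g) = 1) (hp' : p (C', g') = 1)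
    {m : X} (hm : m ∈ C) (hm' : m ∈ C') : g m = g' m := by
  obtain ⟨o, ho⟩ := Option.isSome_iff_exists.mp (hg1 m hm)
  obtain ⟨o', ho'⟩ := Option.isSome_iff_exists.mp (hg1' m hm')
  by_cases hoo : o = o'
  · rw [ho, ho', hoo]
  -- build the protocol measuring m first
  set T : MTree X O := .node m fun o0 =>
    if o0 = o' then MChain (C'.erase m).toList else MChain (C.erase m).toList with hT
  have hvalid : MValid 𝓜 ∅ T := by
    refine ⟨by simp, ⟨C, hC, by simp [Finset.insert_subset_iff, hm]⟩, fun o0 => ?_⟩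
    by_cases h : o0 = o'
    · simp only [hT, h, if_pos rfl]
      refine mchain_valid 𝓜 C' hC' _ _ (Finset.nodup_toList _) ?_ ?_
      · intro x hx
        simp only [Finset.mem_toList, Finset.mem_erase] at hx
        simp [hx.1]
      · exact ins_erase_union hm'
    · simp only [hT, if_neg h]
      refine mchain_valid 𝓜 C hC _ _ (Finset.nodup_toList _) ?_ ?_
      · intro x hx
        simp only [Finset.mem_toList, Finset.mem_erase] at hx
        simp [hx.1]
      · exact ins_erase_union hm
  have hsum := hdet.2 T hvalid
  have hmemg : (C, g) ∈ MOutcomes T ∅ (fun _ => none) := by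
    simp only [hT, MOutcomes, Finset.mem_biUnion]
    refine ⟨o, Finset.mem_univ o, ?_⟩
    rw [if_neg hoo]
    have := mem_mchain (C.erase m).toList (insert m ∅)
      (Function.update (fun _ => none) m (some o)) g
      (fun x hx => by
        by_cases hxm : x = m
        · subst hxm; simp [Function.update_self, ho]
        · rw [Function.update_of_ne hxm]
          simp only [Finset.mem_toList, Finset.mem_erase] at hx
          exact hg0 x fun hxC => hx ⟨hxm, hxC⟩)
      (fun x hx => hg1 x (Finset.mem_erase.mp (Finset.mem_toList.mp hx)).2)
    rwa [ins_erase_union hm] at this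
  have hmemg' : (C', g') ∈ MOutcomes T ∅ (fun _ => none) := by
    simp only [hT, MOutcomes, Finset.mem_biUnion]
    refine ⟨o', Finset.mem_univ o', ?_⟩
    rw [if_pos rfl]
    have := mem_mchain (C'.erase m).toList (insert m ∅)
      (Function.update (fun _ => none) m (some o')) g'
      (fun x hx => by
        by_cases hxm : x = m
        · subst hxm; simp [Function.update_self, ho']
        · rw [Function.update_of_ne hxm]
          simp only [Finset.mem_toList, Finset.mem_erase] at hx
          exact hg0' x fun hxC => hx ⟨hxm, hxC⟩)
      (fun x hx => hg1' x (Finset.mem_erase.mp (Finset.mem_toList.mp hx)).2)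
    rwa [ins_erase_union hm'] at this
  have heq := sum_one_unique hdet.1 hsum hmemg hmemg' hp hp'
  exact congrFun (congrArg Prod.snd heq) m

/-- For each context there is a (unique) probability-one event. -/
lemma det_exists {X O : Type} [Fintype X] [DecidableEq X] [Fintype O] [DecidableEq O]
    (𝓜 : Finset (Finset X)) (p : Finset X × (X → Option O) → ℝ)
    (hdet : IsDetModel 𝓜 p) {C : Finset X} (hC : C ∈ 𝓜) :
    ∃ h : X → Option O, p (C, h) = 1 ∧ (∀ x, x ∉ C → h x = none) ∧ ∀ x ∈ C, (h x).isSome := by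
  have hvalid : MValid (O := O) 𝓜 ∅ (MChain C.toList) :=
    mchain_valid 𝓜 C hC _ _ (Finset.nodup_toList _) (by simp) (by simp)
  obtain ⟨⟨D, h⟩, hmem, hp1⟩ := sum_one_exists hdet.1 (hdet.2 _ hvalid)
  obtain ⟨hD, hoff, hsome⟩ := out_mchain C.toList ∅ (fun _ => none) D h hmem
  have hDC : D = C := by simpa using hD
  subst hDC
  exact ⟨h, hp1, fun x hx => hoff x (by simpa using hx), fun x hx => hsome x (by simpa using hx)⟩

/-- Every deterministic probabilistic model on `H[X]` is completely determined by a
global assignment `a : X → O`: it assigns probability 1 to the event `(C, g)` iff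
`g m = a m` for all `m ∈ C`. -/
theorem det_model_is_global_assignment {X O : Type}
    [Fintype X] [DecidableEq X] [Fintype O] [DecidableEq O]
    (𝓜 : Finset (Finset X))
    (hmax : ∀ C ∈ 𝓜, ∀ C' ∈ 𝓜, C ⊆ C' → C = C')
    (hcover : ∀ m : X, ∃ C ∈ 𝓜, m ∈ C)
    (p : Finset X × (X → Option O) → ℝ)
    (hdet : IsDetModel 𝓜 p) :
    ∃ a : X → O, ∀ C ∈ 𝓜, ∀ g : X → Option O,
      (∀ m, (g m).isSome ↔ m ∈ C) →
      (p (C, g) = 1 ↔ ∀ m ∈ C, g m = some (a m)) := by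
  classical
  -- choose for each observable a context containing it, and its p=1 event
  choose Cm hCm hmCm using hcover
  choose gm hgm1 hgm0 hgms using fun m => det_exists 𝓜 p hdet (hCm m)
  -- the global assignment
  refine ⟨fun m => (gm m m).get (hgms m m (hmCm m)), fun C hC g hsupp => ?_⟩
  have hg0 : ∀ x, x ∉ C → g x = none := fun x hx =>
    Option.not_isSome_iff_eq_none.mp (fun h => hx ((hsupp x).mp h))
  have hg1 : ∀ x ∈ C, (g x).isSome := fun x hx => (hsupp x).mpr hx
  constructor
  · intro hp1 m hm
    have := det_agree 𝓜 p hdet hC (hCm m) hg0 hg1 (hgm0 m) (hgms m) hp1 (hgm1 m) hm (hmCm m)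
    rw [this, Option.some_get]
  · intro hga
    obtain ⟨h, hp1, hh0, hh1⟩ := det_exists 𝓜 p hdet hC
    have : g = h := by
      funext x
      by_cases hx : x ∈ C
      · have h1 := det_agree 𝓜 p hdet hC (hCm x) hh0 hh1 (hgm0 x) (hgms x) hp1 (hgm1 x) hx (hmCm x)
        rw [hga x hx, h1, Option.some_get]
      · rw [hg0 x hx, hh0 x hx]
    rw [this]; exact hp1
end

section
/- Let H₁ = (V₁, E₁) and H₂ = (V₂, E₂) be contextuality scenarios, and define their product scenario with vertex set V₁ × V₂ and edges including all products e₁ × e₂ for e₁ ∈ E₁, e₂ ∈ E₂. If p₁ ∈ Q₁(H₁) with certificate M¹ and p₂ ∈ Q₁(H₂) with certificate M², then the product model p(v₁, v₂) = p₁(v₁) p₂(v₂) has certificate M with M_{(u₁,u₂),(v₁,v₂)} = M¹_{u₁v₁} M²_{u₂v₂} (and M_{1,(v₁,v₂)} = p₁(v₁)p₂(v₂), M_{11} = 1), which is positive semidefinite and satisfies the Q₁ conditions for all product edges e₁ × e₂. -/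
/-! The product certificate is a principal submatrix of the Kronecker product `M₁ ⊗ₖ M₂`, hence
positive semidefinite; on a product edge `e₁ × e₂` its orthogonality relations and row sums
factor into those of `M₁` on `e₁` and `M₂` on `e₂`. -/

open scoped Kronecker

theorem Q1Cert.apply_some_none {V : Type*} [Fintype V] [DecidableEq V] {E : Finset (Finset V)}
    {p : V → ℝ} {M : Matrix (Option V) (Option V) ℝ} (hM : Q1Cert E p M) (v : V) :
    M (some v) none = p v := by
  rw [← hM.1.isHermitian.apply, hM.2.2.1, star_trivial]

def Q1Cert.prodMatrix {V₁ V₂ : Type*} (M₁ : Matrix (Option V₁) (Option V₁) ℝ)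
    (M₂ : Matrix (Option V₂) (Option V₂) ℝ) : Matrix (Option (V₁ × V₂)) (Option (V₁ × V₂)) ℝ :=
  (M₁ ⊗ₖ M₂).submatrix (fun i => (i.map Prod.fst, i.map Prod.snd))
    (fun i => (i.map Prod.fst, i.map Prod.snd))

namespace Q1Cert

variable {V₁ V₂ : Type*} {M₁ : Matrix (Option V₁) (Option V₁) ℝ}
  {M₂ : Matrix (Option V₂) (Option V₂) ℝ}

@[simp]
theorem prodMatrix_some_some (u v : V₁ × V₂) :
    prodMatrix M₁ M₂ (some u) (some v) = M₁ (some u.1) (some v.1) * M₂ (some u.2) (some v.2) :=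
  rfl

variable [Fintype V₁] [Fintype V₂]

theorem posSemidef_prodMatrix (h₁ : M₁.PosSemidef) (h₂ : M₂.PosSemidef) :
    (prodMatrix M₁ M₂).PosSemidef :=
  (h₁.kronecker h₂).submatrix _

variable [DecidableEq V₁] [DecidableEq V₂] {E₁ : Finset (Finset V₁)} {E₂ : Finset (Finset V₂)}
  {p₁ : V₁ → ℝ} {p₂ : V₂ → ℝ}

theorem prodMatrix_eq_zero_of_mem_prod {e₁ : Finset V₁} {e₂ : Finset V₂}
    (hM₁ : Q1Cert E₁ p₁ M₁) (hM₂ : Q1Cert E₂ p₂ M₂) (he₁ : e₁ ∈ E₁) (he₂ : e₂ ∈ E₂)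
    {u v : V₁ × V₂} (hu : u ∈ e₁ ×ˢ e₂) (hv : v ∈ e₁ ×ˢ e₂) (huv : u ≠ v) :
    prodMatrix M₁ M₂ (some u) (some v) = 0 := by
  rw [Finset.mem_product] at hu hv
  rw [prodMatrix_some_some]
  by_cases h₁ : u.1 = v.1
  · have h₂ : u.2 ≠ v.2 := fun h₂ => huv (Prod.ext h₁ h₂)
    rw [hM₂.2.2.2.2.1 e₂ he₂ _ hu.2 _ hv.2 h₂, mul_zero]
  · rw [hM₁.2.2.2.2.1 e₁ he₁ _ hu.1 _ hv.1 h₁, zero_mul]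

theorem sum_prodMatrix_prod {e₁ : Finset V₁} {e₂ : Finset V₂}
    (hM₁ : Q1Cert E₁ p₁ M₁) (hM₂ : Q1Cert E₂ p₂ M₂) (he₁ : e₁ ∈ E₁) (he₂ : e₂ ∈ E₂)
    (v : V₁ × V₂) :
    ∑ u ∈ e₁ ×ˢ e₂, prodMatrix M₁ M₂ (some u) (some v) = p₁ v.1 * p₂ v.2 := by
  simp only [prodMatrix_some_some, Finset.sum_product, ← Finset.sum_mul_sum,
    hM₁.2.2.2.2.2 e₁ he₁, hM₂.2.2.2.2.2 e₂ he₂]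

theorem prod (hM₁ : Q1Cert E₁ p₁ M₁) (hM₂ : Q1Cert E₂ p₂ M₂) :
    Q1Cert ((E₁ ×ˢ E₂).image fun ee => ee.1 ×ˢ ee.2) (fun v => p₁ v.1 * p₂ v.2)
      (prodMatrix M₁ M₂) := by
  refine ⟨posSemidef_prodMatrix hM₁.1 hM₂.1, ?_, fun v => ?_, fun v => ?_, ?_, ?_⟩
  · simp [prodMatrix, hM₁.2.1, hM₂.2.1]
  · simp [prodMatrix, hM₁.2.2.1, hM₂.2.2.1]
  · simp [hM₁.2.2.2.1, hM₂.2.2.2.1]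
  · simp only [Finset.mem_image, Finset.mem_product]
    rintro _ ⟨⟨e₁, e₂⟩, ⟨he₁, he₂⟩, rfl⟩ u hu v hv huv
    exact prodMatrix_eq_zero_of_mem_prod hM₁ hM₂ he₁ he₂ hu hv huv
  · simp only [Finset.mem_image, Finset.mem_product]
    rintro _ ⟨⟨e₁, e₂⟩, ⟨he₁, he₂⟩, rfl⟩ v
    exact sum_prodMatrix_prod hM₁ hM₂ he₁ he₂ v

end Q1Cert

/-- Q₁ is closed under products: if `p₁ ∈ Q₁(H₁)` with certificate `M₁` and
`p₂ ∈ Q₁(H₂)` with certificate `M₂`, then the product model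
`p(v₁,v₂) = p₁(v₁)p₂(v₂)` admits the (Kronecker-type) certificate
`M_{(u₁,u₂),(v₁,v₂)} = M¹_{u₁v₁} M²_{u₂v₂}`, `M_{1,(v₁,v₂)} = p₁(v₁)p₂(v₂)`,
`M₁₁ = 1`, with respect to the edge set consisting of all products `e₁ × e₂`. -/
theorem Q1_product {V₁ V₂ : Type*} [Fintype V₁] [DecidableEq V₁]
    [Fintype V₂] [DecidableEq V₂]
    (E₁ : Finset (Finset V₁)) (E₂ : Finset (Finset V₂))
    (p₁ : V₁ → ℝ) (p₂ : V₂ → ℝ)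
    (M₁ : Matrix (Option V₁) (Option V₁) ℝ) (M₂ : Matrix (Option V₂) (Option V₂) ℝ)
    (hM₁ : Q1Cert E₁ p₁ M₁) (hM₂ : Q1Cert E₂ p₂ M₂) :
    Q1Cert ((E₁ ×ˢ E₂).image fun ee => ee.1 ×ˢ ee.2)
      (fun v : V₁ × V₂ => p₁ v.1 * p₂ v.2)
      (Matrix.of fun i j : Option (V₁ × V₂) =>
        match i, j with
        | none, none => 1
        | none, some v => p₁ v.1 * p₂ v.2
        | some u, none => p₁ u.1 * p₂ u.2
        | some u, some v => M₁ (some u.1) (some v.1) * M₂ (some u.2) (some v.2)) := by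
  convert hM₁.prod hM₂ using 1
  ext (_ | u) (_ | v) <;>
    simp [Q1Cert.prodMatrix, hM₁.2.1, hM₂.2.1, hM₁.2.2.1, hM₂.2.2.1,
      hM₁.apply_some_none, hM₂.apply_some_none]
end
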